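/- arXiv:1706.05737 — 2 statements merged into one kernel-verified Lean document; each statement's English description precedes it below -/
import Mathlib

section
/- Suppose the entries B̃_ij of the random matrix B̃ are i.i.d. uniform on [0, 1], d = d̄·e with d̄ > 0, m ≥ 2, U = {h ∈ ℝ^m : h ≥ 0, R h ≤ r} is nonempty and bounded, and ε := 2√((log m)/n) satisfies ε < 1. Then with probability at least 1 − 1/m, z_AR(B̃) ≤ z_Aff(B̃) ≤ (2/(1−ε))·z_AR(B̃). -/
open Matrix MeasureTheory ProbabilityTheory

/-- Optimal value of the two-stage adjustable robust problem. -/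
noncomputable def zAR {m n : ℕ} (U : Set (Fin m → ℝ)) (c d : Fin n → ℝ)
    (A B : Matrix (Fin m) (Fin n) ℝ) : EReal :=
  ⨅ x : {x : Fin n → ℝ // 0 ≤ x},
    ((c ⬝ᵥ (x : Fin n → ℝ) : ℝ) : EReal) +
      ⨆ h : U,
        ⨅ _y : {y : Fin n → ℝ // 0 ≤ y ∧
            (h : Fin m → ℝ) ≤ A *ᵥ (x : Fin n → ℝ) + B *ᵥ y},
          ((d ⬝ᵥ (_y : Fin n → ℝ) : ℝ) : EReal)

/-- Optimal value of the affine-policy problem. -/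
noncomputable def zAff {m n : ℕ} (U : Set (Fin m → ℝ)) (c d : Fin n → ℝ)
    (A B : Matrix (Fin m) (Fin n) ℝ) : EReal :=
  ⨅ p : {p : (Fin n → ℝ) × Matrix (Fin n) (Fin m) ℝ × (Fin n → ℝ) //
      0 ≤ p.1 ∧ ∀ h ∈ U, 0 ≤ p.2.1 *ᵥ h + p.2.2 ∧
        h ≤ A *ᵥ p.1 + B *ᵥ (p.2.1 *ᵥ h + p.2.2)},
    ((c ⬝ᵥ p.1.1 : ℝ) : EReal) +
      ⨆ h : U, ((d ⬝ᵥ (p.1.2.1 *ᵥ (h : Fin m → ℝ) + p.1.2.2) : ℝ) : EReal)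

/-- The polyhedral uncertainty set. -/
def polyU {m L : ℕ} (R : Matrix (Fin L) (Fin m) ℝ) (r : Fin L → ℝ) : Set (Fin m → ℝ) :=
  {h | 0 ≤ h ∧ R *ᵥ h ≤ r}

/-- The dualized uncertainty set. -/
def dualW {m n : ℕ} (B : Matrix (Fin m) (Fin n) ℝ) (d : Fin n → ℝ) : Set (Fin m → ℝ) :=
  {w | 0 ≤ w ∧ Bᵀ *ᵥ w ≤ d}

/-- Optimal value of the dualized adjustable robust problem. -/
noncomputable def zdAR {m n L : ℕ} (c d : Fin n → ℝ) (A B : Matrix (Fin m) (Fin n) ℝ)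
    (R : Matrix (Fin L) (Fin m) ℝ) (r : Fin L → ℝ) : EReal :=
  ⨅ x : {x : Fin n → ℝ // 0 ≤ x},
    ((c ⬝ᵥ (x : Fin n → ℝ) : ℝ) : EReal) +
      ⨆ w : dualW B d,
        ⨅ l : {l : Fin L → ℝ // 0 ≤ l ∧ (w : Fin m → ℝ) ≤ Rᵀ *ᵥ l},
          ((-(A *ᵥ (x : Fin n → ℝ)) ⬝ᵥ (w : Fin m → ℝ) + r ⬝ᵥ (l : Fin L → ℝ) : ℝ) : EReal)

/-- Optimal value of the dualized affine-policy problem. -/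
noncomputable def zdAff {m n L : ℕ} (c d : Fin n → ℝ) (A B : Matrix (Fin m) (Fin n) ℝ)
    (R : Matrix (Fin L) (Fin m) ℝ) (r : Fin L → ℝ) : EReal :=
  ⨅ p : {p : (Fin n → ℝ) × Matrix (Fin L) (Fin m) ℝ × (Fin L → ℝ) //
      0 ≤ p.1 ∧ ∀ w ∈ dualW B d, 0 ≤ p.2.1 *ᵥ w + p.2.2 ∧
        w ≤ Rᵀ *ᵥ (p.2.1 *ᵥ w + p.2.2)},
    ((c ⬝ᵥ p.1.1 : ℝ) : EReal) +
      ⨆ w : dualW B d,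
        ((-(A *ᵥ p.1.1) ⬝ᵥ (w : Fin m → ℝ) + r ⬝ᵥ (p.1.2.1 *ᵥ (w : Fin m → ℝ) + p.1.2.2) : ℝ) : EReal)


/-!
On the event that every entry of `B` lies in `[0, 1]` and every row of `B` sums to at least
`(1 - ε) n / 2`, the approximation bound is deterministic. If the worst-case recourse cost at a
first-stage decision `x` is `φ`, then, as `(B y)ᵢ ≤ ∑ⱼ yⱼ`, every scenario `h ∈ U` exceeds
`A x` by at most `φ / d̄` in each coordinate; hence the static recourse
`y ≡ 2 φ / (d̄ (1 - ε) n)` is feasible and costs `2 φ / (1 - ε)`. By Hoeffding's inequality a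
row sum falls below `n / 2 - √(n log m)` with probability at most `1 / m²`, and a union bound
over the `m` rows leaves probability `1 / m`.
-/

noncomputable def recourseCost {m n : ℕ} (U : Set (Fin m → ℝ)) (d : Fin n → ℝ)
    (A B : Matrix (Fin m) (Fin n) ℝ) (x : Fin n → ℝ) : EReal :=
  ⨆ h : U, ⨅ y : {y : Fin n → ℝ // 0 ≤ y ∧ (h : Fin m → ℝ) ≤ A *ᵥ x + B *ᵥ y},
    ((d ⬝ᵥ (y : Fin n → ℝ) : ℝ) : EReal)

section Deterministic

variable {m n : ℕ} {U : Set (Fin m → ℝ)} {c d : Fin n → ℝ} {A B : Matrix (Fin m) (Fin n) ℝ}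

lemma zAR_eq_iInf_recourseCost :
    zAR U c d A B =
      ⨅ x : {x : Fin n → ℝ // 0 ≤ x}, ((c ⬝ᵥ (x : Fin n → ℝ) : ℝ) : EReal) +
        recourseCost U d A B x :=
  rfl

lemma zAR_le_zAff : zAR U c d A B ≤ zAff U c d A B := by
  refine le_iInf fun ⟨⟨x, P, q⟩, hx, hfeas⟩ => iInf_le_of_le ⟨x, hx⟩ ?_
  refine add_le_add le_rfl (iSup_mono fun h => ?_)
  exact iInf_le_of_le ⟨P *ᵥ (h : Fin m → ℝ) + q, hfeas h h.2⟩ le_rfl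

lemma zAff_le_of_static_policy {x q : Fin n → ℝ} (hx : 0 ≤ x) (hq : 0 ≤ q)
    (hfeas : ∀ h ∈ U, h ≤ A *ᵥ x + B *ᵥ q) :
    zAff U c d A B ≤ ((c ⬝ᵥ x + d ⬝ᵥ q : ℝ) : EReal) := by
  have hpolicy : ∀ h ∈ U, 0 ≤ (0 : Matrix (Fin n) (Fin m) ℝ) *ᵥ h + q ∧
      h ≤ A *ᵥ x + B *ᵥ ((0 : Matrix (Fin n) (Fin m) ℝ) *ᵥ h + q) := by
    simpa only [zero_mulVec, zero_add] using fun h hh => ⟨hq, hfeas h hh⟩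
  refine iInf_le_of_le ⟨(x, 0, q), hx, hpolicy⟩ ?_
  rw [EReal.coe_add]
  exact add_le_add le_rfl (iSup_le fun h => by simp only [zero_mulVec, zero_add, le_refl])

lemma recourseCost_nonneg (hU : U.Nonempty) (hd : 0 ≤ d) (x : Fin n → ℝ) :
    0 ≤ recourseCost U d A B x := by
  obtain ⟨h, hh⟩ := hU
  exact le_iSup_of_le ⟨h, hh⟩ <| le_iInf fun y =>
    EReal.coe_nonneg.mpr (dotProduct_nonneg_of_nonneg hd y.2.1)

lemma mulVec_apply_le_sum_of_le_one {y : Fin n → ℝ} (i : Fin m) (hB : ∀ j, B i j ≤ 1)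
    (hy : 0 ≤ y) : (B *ᵥ y) i ≤ ∑ j, y j :=
  show ∑ j, B i j * y j ≤ ∑ j, y j from
    Finset.sum_le_sum fun j _ => mul_le_of_le_one_left (hy j) (hB j)

lemma mul_sub_le_recourseCost {dbar : ℝ} (hdbar : 0 ≤ dbar) (hB : ∀ i j, B i j ≤ 1)
    (x : Fin n → ℝ) {h : Fin m → ℝ} (hh : h ∈ U) (i : Fin m) :
    ((dbar * (h i - (A *ᵥ x) i) : ℝ) : EReal) ≤ recourseCost U (fun _ => dbar) A B x := by
  refine le_iSup_of_le ⟨h, hh⟩ <| le_iInf fun ⟨y, hy, hcover⟩ => EReal.coe_le_coe_iff.mpr ?_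
  have hcover_i : h i - (A *ᵥ x) i ≤ (B *ᵥ y) i := sub_le_iff_le_add'.mpr (hcover i)
  calc dbar * (h i - (A *ᵥ x) i) ≤ dbar * ∑ j, y j :=
        mul_le_mul_of_nonneg_left (hcover_i.trans (mulVec_apply_le_sum_of_le_one i (hB i) hy))
          hdbar
    _ = (fun _ => dbar) ⬝ᵥ y := by simp only [dotProduct, Finset.mul_sum]

lemma zAff_le_mul_add_recourseCost (hU : U.Nonempty) (hc : 0 ≤ c) {dbar κ : ℝ}
    (hdbar : 0 < dbar) (hn : 0 < n) (hκ : 1 ≤ κ) (hB : ∀ i j, B i j ≤ 1)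
    (hrow : ∀ i, (n : ℝ) ≤ κ * ∑ j, B i j) {x : Fin n → ℝ} (hx : 0 ≤ x) :
    zAff U c (fun _ => dbar) A B ≤
      (κ : EReal) * (((c ⬝ᵥ x : ℝ) : EReal) + recourseCost U (fun _ => dbar) A B x) := by
  have hnonneg := recourseCost_nonneg (A := A) (B := B) hU (fun _ => hdbar.le) x
  induction hΦ : recourseCost U (fun _ => dbar) A B x using EReal.rec with
  | bot => simp [hΦ] at hnonneg
  | top =>
    rw [EReal.coe_add_top, EReal.mul_top_of_pos (by exact_mod_cast one_pos.trans_le hκ)]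
    exact le_top
  | coe φ =>
    have hφ : 0 ≤ φ := by exact_mod_cast hΦ ▸ hnonneg
    have hshort : ∀ h ∈ U, ∀ i, dbar * (h i - (A *ᵥ x) i) ≤ φ := fun h hh i => by
      exact_mod_cast hΦ ▸ mul_sub_le_recourseCost hdbar.le hB x hh i
    -- Each row of `B` sums to at least `n / κ`, so this constant recourse covers a shortfall
    -- of `φ / dbar` in every coordinate, at cost `κ φ`.
    set e := κ * φ / (dbar * n) with he_def
    have hnR : (0 : ℝ) < n := by exact_mod_cast hn
    have he : 0 ≤ e := by positivity
    have hfeas : ∀ h ∈ U, h ≤ A *ᵥ x + B *ᵥ fun _ => e := fun h hh i => by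
      have hBe : (B *ᵥ fun _ => e) i = (∑ j, B i j) * e := by
        simp only [mulVec, dotProduct, Finset.sum_mul]
      have hcover : φ / dbar ≤ (∑ j, B i j) * e :=
        calc φ / dbar = n * φ / (dbar * n) := by field_simp
          _ ≤ (κ * ∑ j, B i j) * φ / (dbar * n) := by gcongr; exact hrow i
          _ = (∑ j, B i j) * e := by rw [he_def]; ring
      have hgap := (le_div_iff₀' hdbar).mpr (hshort h hh i)
      rw [Pi.add_apply, hBe]
      linarith
    have hcost : (fun _ => dbar : Fin n → ℝ) ⬝ᵥ (fun _ => e) = κ * φ := by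
      simp only [dotProduct, Finset.sum_const, Finset.card_univ, Fintype.card_fin, nsmul_eq_mul,
        he_def]
      field_simp
    refine (zAff_le_of_static_policy hx (fun _ => he) hfeas).trans ?_
    rw [hcost, ← EReal.coe_add, ← EReal.coe_mul, EReal.coe_le_coe_iff]
    nlinarith [dotProduct_nonneg_of_nonneg hc hx]

lemma zAff_le_mul_zAR (hU : U.Nonempty) (hc : 0 ≤ c) {dbar κ : ℝ}
    (hdbar : 0 < dbar) (hn : 0 < n) (hκ : 1 ≤ κ) (hB : ∀ i j, B i j ≤ 1)
    (hrow : ∀ i, (n : ℝ) ≤ κ * ∑ j, B i j) :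
    zAff U c (fun _ => dbar) A B ≤ (κ : EReal) * zAR U c (fun _ => dbar) A B := by
  have hκ0 : (0 : EReal) < κ := by exact_mod_cast one_pos.trans_le hκ
  rw [← EReal.div_le_iff_le_mul hκ0 (EReal.coe_ne_top κ), zAR_eq_iInf_recourseCost]
  refine le_iInf fun ⟨x, hx⟩ => ?_
  rw [EReal.div_le_iff_le_mul hκ0 (EReal.coe_ne_top κ)]
  exact zAff_le_mul_add_recourseCost hU hc hdbar hn hκ hB hrow hx

end Deterministic

lemma ofReal_one_sub_le_of_measure_compl_le {α : Type*} [MeasurableSpace α] {μ : Measure α}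
    [IsProbabilityMeasure μ] {s : Set α} {a : ℝ} (ha : 0 ≤ a) (hs : μ sᶜ ≤ ENNReal.ofReal a) :
    ENNReal.ofReal (1 - a) ≤ μ s := by
  rw [ENNReal.ofReal_sub 1 ha, ENNReal.ofReal_one, tsub_le_iff_right]
  calc 1 = μ Set.univ := measure_univ.symm
    _ ≤ μ s + μ sᶜ := measure_univ_le_add_compl s
    _ ≤ μ s + ENNReal.ofReal a := by gcongr

section Uniform

open Real

variable {Ω : Type*} [MeasurableSpace Ω] {P : Measure Ω}

lemma ae_mem_Icc_of_map_eq_restrict_Icc {X : Ω → ℝ} {a b : ℝ} (hX : AEMeasurable X P)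
    (hunif : P.map X = volume.restrict (Set.Icc a b)) : ∀ᵐ ω ∂P, X ω ∈ Set.Icc a b :=
  (ae_map_iff hX measurableSet_Icc).mp (hunif ▸ ae_restrict_mem measurableSet_Icc)

lemma integral_eq_half_of_map_eq_uniform {X : Ω → ℝ} (hX : AEMeasurable X P)
    (hunif : P.map X = volume.restrict (Set.Icc (0 : ℝ) 1)) : P[X] = 1 / 2 := by
  calc P[X] = ∫ x, x ∂(P.map X) := (integral_map hX aestronglyMeasurable_id).symm
    _ = 1 / 2 := by
      rw [hunif, integral_Icc_eq_integral_Ioc, ← intervalIntegral.integral_of_le zero_le_one,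
        integral_id]
      norm_num

lemma hasSubgaussianMGF_half_sub_of_map_eq_uniform [IsProbabilityMeasure P] {X : Ω → ℝ}
    (hX : AEMeasurable X P) (hunif : P.map X = volume.restrict (Set.Icc (0 : ℝ) 1)) :
    HasSubgaussianMGF (fun ω => 1 / 2 - X ω) (1 / 4) P := by
  have hoeffding := (hasSubgaussianMGF_of_mem_Icc hX
    (ae_mem_Icc_of_map_eq_restrict_Icc hX hunif)).neg
  rw [integral_eq_half_of_map_eq_uniform hX hunif] at hoeffding
  convert hoeffding using 1
  · ext ω; simp
  · norm_num

lemma measureReal_sum_half_sub_ge_le {ι : Type*} [Fintype ι] [IsProbabilityMeasure P]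
    {X : ι → Ω → ℝ} (hX : ∀ j, Measurable (X j)) (hindep : iIndepFun X P)
    (hunif : ∀ j, P.map (X j) = volume.restrict (Set.Icc (0 : ℝ) 1)) {δ : ℝ} (hδ : 0 ≤ δ) :
    P.real {ω | δ ≤ ∑ j, (1 / 2 - X j ω)} ≤ exp (-2 * δ ^ 2 / Fintype.card ι) := by
  have hindep' : iIndepFun (fun j ω => 1 / 2 - X j ω) P :=
    hindep.comp (fun _ x => 1 / 2 - x) fun _ => measurable_const.sub measurable_id
  have := HasSubgaussianMGF.measure_sum_ge_le_of_iIndepFun hindep' (s := Finset.univ)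
    (fun j _ => hasSubgaussianMGF_half_sub_of_map_eq_uniform (hX j).aemeasurable (hunif j)) hδ
  refine this.trans_eq (congrArg exp ?_)
  push_cast
  rw [Finset.sum_const, Finset.card_univ, nsmul_eq_mul]
  ring

lemma ofReal_one_sub_one_div_le_measure_forall_sum_half_sub_lt [IsProbabilityMeasure P] {m n : ℕ}
    (hn : 0 < n) {X : Fin m → Fin n → Ω → ℝ} (hX : ∀ i j, Measurable (X i j))
    (hindep : iIndepFun (fun p : Fin m × Fin n => X p.1 p.2) P)
    (hunif : ∀ i j, P.map (X i j) = volume.restrict (Set.Icc (0 : ℝ) 1)) :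
    ENNReal.ofReal (1 - 1 / m) ≤
      P {ω | ∀ i, ∑ j, (1 / 2 - X i j ω) < √(n * log m)} := by
  have hrow : ∀ i : Fin m,
      P {ω | √(n * log m) ≤ ∑ j, (1 / 2 - X i j ω)} ≤ ENNReal.ofReal ((m : ℝ) ^ 2)⁻¹ := by
    intro i
    have hm : (0 : ℝ) < m := by exact_mod_cast i.pos
    have hexponent : -2 * √(n * log m) ^ 2 / Fintype.card (Fin n) = -(2 * log m) := by
      rw [Real.sq_sqrt (by positivity), Fintype.card_fin]
      field_simp
    rw [← ofReal_measureReal]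
    refine ENNReal.ofReal_le_ofReal ((measureReal_sum_half_sub_ge_le (hX i)
      (hindep.precomp (g := Prod.mk i) (Prod.mk_right_injective i)) (hunif i)
      (Real.sqrt_nonneg _)).trans_eq ?_)
    rw [hexponent, exp_neg, two_mul, exp_add, exp_log hm, sq]
  refine ofReal_one_sub_le_of_measure_compl_le (by positivity) ?_
  calc P {ω | ∀ i, ∑ j, (1 / 2 - X i j ω) < √(n * log m)}ᶜ
      ≤ P (⋃ i, {ω | √(n * log m) ≤ ∑ j, (1 / 2 - X i j ω)}) :=
        measure_mono fun ω hω => by simpa using hω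
    _ ≤ ∑ i : Fin m, ENNReal.ofReal ((m : ℝ) ^ 2)⁻¹ :=
        (measure_iUnion_fintype_le _ _).trans (Finset.sum_le_sum fun i _ => hrow i)
    _ = ENNReal.ofReal (1 / m) := by
        rw [← ENNReal.ofReal_sum_of_nonneg fun _ _ => by positivity]
        congr 1
        simp only [Finset.sum_const, Finset.card_univ, Fintype.card_fin, nsmul_eq_mul]
        field_simp

end Uniform

lemma natCast_le_mul_sum_of_sum_half_sub_lt {n : ℕ} {ε : ℝ} (hε1 : ε < 1) {b : Fin n → ℝ}
    (h : ∑ j, (1 / 2 - b j) < ε * n / 2) : (n : ℝ) ≤ 2 / (1 - ε) * ∑ j, b j := by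
  rw [Finset.sum_sub_distrib, Finset.sum_const, Finset.card_univ, Fintype.card_fin,
    nsmul_eq_mul] at h
  rw [div_mul_eq_mul_div, le_div_iff₀ (by linarith)]
  nlinarith

theorem affine_approx_uniform_general {m n L : ℕ} (hn : 1 ≤ n)
    (c : Fin n → ℝ) (A : Matrix (Fin m) (Fin n) ℝ)
    (R : Matrix (Fin L) (Fin m) ℝ) (r : Fin L → ℝ)
    (hc : 0 ≤ c)
    (hU : (polyU R r).Nonempty)
    (dbar : ℝ) (hdbar : 0 < dbar)
    (ε : ℝ) (hε : ε = 2 * Real.sqrt (Real.log m / n)) (hε1 : ε < 1)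
    {Ω : Type} [MeasurableSpace Ω] (Pr : Measure Ω) [IsProbabilityMeasure Pr]
    (Bt : Fin m → Fin n → Ω → ℝ)
    (hmeas : ∀ i j, Measurable (Bt i j))
    (hindep : iIndepFun
      (fun p : Fin m × Fin n => Bt p.1 p.2) Pr)
    (hunif : ∀ i j, Measure.map (Bt i j) Pr = volume.restrict (Set.Icc (0 : ℝ) 1)) :
    ENNReal.ofReal (1 - 1 / m) ≤
      Pr {ω | zAR (polyU R r) c (fun _ => dbar) A (fun i j => Bt i j ω) ≤
              zAff (polyU R r) c (fun _ => dbar) A (fun i j => Bt i j ω) ∧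
            zAff (polyU R r) c (fun _ => dbar) A (fun i j => Bt i j ω) ≤
              ((2 / (1 - ε) : ℝ) : EReal) *
                zAR (polyU R r) c (fun _ => dbar) A (fun i j => Bt i j ω)} := by
  have hnR : (0 : ℝ) < n := by exact_mod_cast hn
  have hε0 : 0 ≤ ε := hε ▸ by positivity
  have hκ : 1 ≤ 2 / (1 - ε) := by
    rw [le_div_iff₀ (by linarith)]
    linarith
  have hthreshold : √(n * Real.log m) = ε * n / 2 := by
    rw [← Real.sqrt_sq (by positivity : 0 ≤ ε * n / 2), div_pow, mul_pow, hε, mul_pow,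
      Real.sq_sqrt (div_nonneg (Real.log_natCast_nonneg m) hnR.le)]
    field_simp
  have hentries : ∀ᵐ ω ∂Pr, ∀ i j, Bt i j ω ∈ Set.Icc (0 : ℝ) 1 :=
    ae_all_iff.mpr fun i => ae_all_iff.mpr fun j =>
      ae_mem_Icc_of_map_eq_restrict_Icc (hmeas i j).aemeasurable (hunif i j)
  refine le_trans ?_ (measure_mono (s := {ω | ∀ i, ∑ j, (1 / 2 - Bt i j ω) < √(n * Real.log m)} ∩
      {ω | ∀ i j, Bt i j ω ∈ Set.Icc (0 : ℝ) 1})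
    fun ω ⟨hrow, hω⟩ => ⟨zAR_le_zAff, zAff_le_mul_zAR hU hc hdbar hn hκ (fun i j => (hω i j).2)
      fun i => natCast_le_mul_sum_of_sum_half_sub_lt hε1 (hthreshold ▸ hrow i)⟩)
  rw [measure_inter_conull hentries]
  exact ofReal_one_sub_one_div_le_measure_forall_sum_half_sub_lt hn hmeas hindep hunif

/-- For i.i.d. entries uniform on `[0,1]`, with probability at least
`1 - 1/m`, affine policies are a `2/(1-ε)`-approximation of the adjustable problem,
where `ε = 2√(log m / n)`. -/
theorem affine_approx_uniform {m n L : ℕ} (hm : 2 ≤ m) (hn : 1 ≤ n) (hL : 0 < L)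
    (c : Fin n → ℝ) (A : Matrix (Fin m) (Fin n) ℝ)
    (R : Matrix (Fin L) (Fin m) ℝ) (r : Fin L → ℝ)
    (hc : 0 ≤ c) (hA : ∀ i j, 0 ≤ A i j) (hR : ∀ i j, 0 ≤ R i j) (hr : 0 ≤ r)
    (hU : (polyU R r).Nonempty) (hUbdd : Bornology.IsBounded (polyU R r))
    (dbar : ℝ) (hdbar : 0 < dbar)
    (ε : ℝ) (hε : ε = 2 * Real.sqrt (Real.log m / n)) (hε1 : ε < 1)
    {Ω : Type} [MeasurableSpace Ω] (Pr : Measure Ω) [IsProbabilityMeasure Pr]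
    (Bt : Fin m → Fin n → Ω → ℝ)
    (hmeas : ∀ i j, Measurable (Bt i j))
    (hindep : iIndepFun
      (fun p : Fin m × Fin n => Bt p.1 p.2) Pr)
    (hunif : ∀ i j, Measure.map (Bt i j) Pr = volume.restrict (Set.Icc (0 : ℝ) 1)) :
    ENNReal.ofReal (1 - 1 / m) ≤
      Pr {ω | zAR (polyU R r) c (fun _ => dbar) A (fun i j => Bt i j ω) ≤
              zAff (polyU R r) c (fun _ => dbar) A (fun i j => Bt i j ω) ∧
            zAff (polyU R r) c (fun _ => dbar) A (fun i j => Bt i j ω) ≤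
              ((2 / (1 - ε) : ℝ) : EReal) *
                zAR (polyU R r) c (fun _ => dbar) A (fun i j => Bt i j ω)} :=
  affine_approx_uniform_general hn c A R r hc hU dbar hdbar ε hε hε1 Pr Bt hmeas hindep hunif
end

section
/- Let m ≥ 2 and consider the two-stage instance with n = m, c = 0, A = 0, d = e (the all-ones vector of ℝ^m), uncertainty set U = conv({0, e₁, …, e_m, ν₁, …, ν_m}) where ν_i = (1/√m)(e − e_i), and matrix B ∈ ℝ^{m×m} with B_ii = 1 and B_ij = 1/√m for i ≠ j. Then z_Aff(B) ≥ ((m−1)/(6√m))·z_AR(B). -/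
/-!
The adjustable value is at most `1`: the scenarios that can be covered at cost at most `1` form a
convex set containing every generator of `U` (cover `eᵢ` by `eᵢ` and `νᵢ` by `e / m`).

Conversely, let `y(h) = P h + q` be a feasible affine policy of worst-case cost at most `T`, and
write `s = √m`, `S` for the sum of the entries of `P`, `tr` for its trace and `Q` for the sum of
`q`. Feasibility and the cost bound at the points `eᵢ` and `νᵢ`, summed over `i`, give
`S + m Q ≤ m T`, `(m - 1) S + s m Q ≤ s m T`, `0 ≤ S - tr + s Q` and `s m ≤ s (tr + Q) + S + m Q`,
which combine to `m ≤ (2 s + 1) T`; hence `T ≥ √m / 3 ≥ (m - 1) / (6 √m)`.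
-/

open Matrix MeasureTheory ProbabilityTheory

/-- The uncertainty set of the worst-case instance:
`U = conv{0, e₁, …, e_m, ν₁, …, ν_m}` with `νᵢ = (1/√m)(e - eᵢ)`. -/
noncomputable def badU (m : ℕ) : Set (Fin m → ℝ) :=
  convexHull ℝ (insert 0
    (Set.range (fun i : Fin m => (Pi.single i 1 : Fin m → ℝ)) ∪
      Set.range (fun i : Fin m => (Real.sqrt m)⁻¹ • ((1 : Fin m → ℝ) - Pi.single i 1))))

/-- The worst-case recourse matrix: `B_ii = 1`, `B_ij = 1/√m` for `i ≠ j`. -/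
noncomputable def badB (m : ℕ) : Matrix (Fin m) (Fin m) ℝ :=
  Matrix.of fun i j => if i = j then (1 : ℝ) else 1 / Real.sqrt m


open Finset

theorem convex_setOf_exists_recourse {m n : ℕ} (B : Matrix (Fin m) (Fin n) ℝ) (d : Fin n → ℝ)
    (t : ℝ) :
    Convex ℝ {h : Fin m → ℝ | ∃ y, 0 ≤ y ∧ h ≤ B *ᵥ y ∧ d ⬝ᵥ y ≤ t} := by
  rintro h₁ ⟨y₁, hy₁, hcover₁, hcost₁⟩ h₂ ⟨y₂, hy₂, hcover₂, hcost₂⟩ a b ha hb hab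
  refine ⟨a • y₁ + b • y₂, by positivity, ?_, ?_⟩
  · rw [mulVec_add, mulVec_smul, mulVec_smul]
    gcongr
  · rw [dotProduct_add, dotProduct_smul, dotProduct_smul, smul_eq_mul, smul_eq_mul]
    calc a * (d ⬝ᵥ y₁) + b * (d ⬝ᵥ y₂) ≤ a * t + b * t := by gcongr
      _ = t := by rw [← add_mul, hab, one_mul]

section TwoStage

variable {m n : ℕ} {U : Set (Fin m → ℝ)} {c d : Fin n → ℝ} {A B : Matrix (Fin m) (Fin n) ℝ}

theorem zAR_le_of_forall_exists_recourse {x : Fin n → ℝ} (hx : 0 ≤ x) {t : ℝ}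
    (hU : ∀ h ∈ U, ∃ y, 0 ≤ y ∧ h ≤ A *ᵥ x + B *ᵥ y ∧ d ⬝ᵥ y ≤ t) :
    zAR U c d A B ≤ ((c ⬝ᵥ x + t : ℝ) : EReal) := by
  refine (iInf_le _ ⟨x, hx⟩).trans ?_
  rw [EReal.coe_add]
  gcongr
  refine iSup_le fun h => ?_
  obtain ⟨y, hy, hcover, hcost⟩ := hU h h.2
  exact (iInf_le _ ⟨y, hy, hcover⟩).trans (EReal.coe_le_coe_iff.2 hcost)

theorem le_zAff_of_forall_le {κ : ℝ}
    (hκ : ∀ x P q, 0 ≤ x → (∀ h ∈ U, 0 ≤ P *ᵥ h + q ∧ h ≤ A *ᵥ x + B *ᵥ (P *ᵥ h + q)) →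
      ∀ T : ℝ, (∀ h ∈ U, d ⬝ᵥ (P *ᵥ h + q) ≤ T) → κ ≤ c ⬝ᵥ x + T) :
    (κ : EReal) ≤ zAff U c d A B := by
  refine le_iInf fun ⟨⟨x, P, q⟩, hx, hfeas⟩ => ?_
  have hκ' := hκ x P q hx hfeas
  rw [add_comm, ← EReal.sub_le_iff_le_add (Or.inl (EReal.coe_ne_bot _))
    (Or.inl (EReal.coe_ne_top _)), ← EReal.coe_sub, le_iSup_iff]
  intro b hb
  induction b with
  | bot =>
    have := hκ' (κ - c ⬝ᵥ x - 1) fun h hh => absurd (hb ⟨h, hh⟩) (by simp)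
    linarith
  | coe T =>
    have := hκ' T fun h hh => EReal.coe_le_coe_iff.1 (hb ⟨h, hh⟩)
    exact EReal.coe_le_coe_iff.2 (by linarith)
  | top => exact le_top

end TwoStage

section BadInstance

variable {m : ℕ}

theorem badB_mulVec_apply (v : Fin m → ℝ) (i : Fin m) :
    (badB m *ᵥ v) i = v i + (√m)⁻¹ * (∑ j, v j - v i) := by
  have hsplit : ∀ j, badB m i j * v j = (√m)⁻¹ * v j + if i = j then (1 - (√m)⁻¹) * v j else 0 := by
    intro j
    by_cases hij : i = j
    · simp [badB, hij]
      ring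
    · simp [badB, hij]
  simp only [mulVec, dotProduct, hsplit, sum_add_distrib, ← mul_sum, sum_ite_eq, mem_univ,
    if_true]
  ring

theorem single_mem_badU (i : Fin m) : (Pi.single i 1 : Fin m → ℝ) ∈ badU m :=
  subset_convexHull ℝ _ (Set.mem_insert_of_mem _ (Or.inl ⟨i, rfl⟩))

theorem nu_mem_badU (i : Fin m) : (√m)⁻¹ • ((1 : Fin m → ℝ) - Pi.single i 1) ∈ badU m :=
  subset_convexHull ℝ _ (Set.mem_insert_of_mem _ (Or.inr ⟨i, rfl⟩))

theorem one_le_sqrt_natCast (hm : 0 < m) : 1 ≤ √(m : ℝ) :=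
  Real.one_le_sqrt.2 (by exact_mod_cast hm)

theorem exists_recourse_of_mem_badU (hm : 0 < m) {h : Fin m → ℝ} (hh : h ∈ badU m) :
    ∃ y, 0 ≤ y ∧ h ≤ badB m *ᵥ y ∧ (fun _ => (1 : ℝ)) ⬝ᵥ y ≤ 1 := by
  have hs := one_le_sqrt_natCast hm
  have hm' : (0 : ℝ) < m := by exact_mod_cast hm
  refine convexHull_min ?_ (convex_setOf_exists_recourse _ _ _) hh
  rintro _ (rfl | ⟨i, rfl⟩ | ⟨i, rfl⟩)
  · exact ⟨0, le_rfl, by simp, by simp⟩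
  · refine ⟨Pi.single i 1, Pi.single_nonneg.2 zero_le_one, fun k => ?_, by simp⟩
    rw [badB_mulVec_apply]
    rcases eq_or_ne k i with rfl | hk
    · simp
    · simp [Pi.single_eq_of_ne hk]
  · refine ⟨fun _ => (m : ℝ)⁻¹, fun _ => by positivity, fun k => ?_, ?_⟩
    swap
    · simp [dotProduct, hm'.ne']
    have hν : ((√m)⁻¹ • ((1 : Fin m → ℝ) - Pi.single i 1) : Fin m → ℝ) k ≤ (√m)⁻¹ := by
      have : (0 : ℝ) ≤ (Pi.single i 1 : Fin m → ℝ) k := by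
        rw [Pi.single_apply]; split_ifs <;> norm_num
      simp only [Pi.smul_apply, Pi.sub_apply, Pi.one_apply, smul_eq_mul]
      nlinarith [inv_pos.2 (zero_lt_one.trans_le hs)]
    refine hν.trans ?_
    rw [badB_mulVec_apply]
    simp only [sum_const, card_univ, Fintype.card_fin, nsmul_eq_mul, mul_inv_cancel₀ hm'.ne']
    have : (√m)⁻¹ ≤ 1 := inv_le_one_of_one_le₀ hs
    nlinarith [inv_pos.2 hm']

theorem affine_bounds_at_single (hm : 0 < m) {P : Matrix (Fin m) (Fin m) ℝ} {q : Fin m → ℝ}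
    {T : ℝ} (i : Fin m)
    (hfeas : 0 ≤ P *ᵥ Pi.single i 1 + q ∧ Pi.single i 1 ≤ badB m *ᵥ (P *ᵥ Pi.single i 1 + q))
    (hT : ∑ k, (P *ᵥ Pi.single i 1 + q) k ≤ T) :
    ∑ k, P k i + ∑ k, q k ≤ T ∧ √m ≤ √m * (P i i + q i) + (∑ k, P k i + ∑ k, q k) := by
  have hs := one_le_sqrt_natCast hm
  have hy : ∀ k, (P *ᵥ Pi.single i 1 + q) k = P k i + q k := by simp
  have hcost : ∑ k, (P *ᵥ Pi.single i 1 + q) k = ∑ k, P k i + ∑ k, q k := by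
    simp only [hy, sum_add_distrib]
  have hnonneg : 0 ≤ P i i + q i := hy i ▸ hfeas.1 i
  have hcover := hfeas.2 i
  rw [badB_mulVec_apply, hcost, hy, Pi.single_eq_same] at hcover
  refine ⟨hcost ▸ hT, ?_⟩
  have := mul_le_mul_of_nonneg_left hcover (zero_le_one.trans hs)
  rw [mul_one, mul_add, ← mul_assoc, mul_inv_cancel₀ (by positivity), one_mul] at this
  linarith

theorem affine_bounds_at_nu (hm : 0 < m) {P : Matrix (Fin m) (Fin m) ℝ} {q : Fin m → ℝ}
    {T : ℝ} (i : Fin m) (hnonneg : 0 ≤ P *ᵥ ((√m)⁻¹ • ((1 : Fin m → ℝ) - Pi.single i 1)) + q)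
    (hT : ∑ k, (P *ᵥ ((√m)⁻¹ • ((1 : Fin m → ℝ) - Pi.single i 1)) + q) k ≤ T) :
    0 ≤ ∑ j, P i j - P i i + √m * q i ∧
      ∑ k, ∑ j, P k j - ∑ k, P k i + √m * ∑ k, q k ≤ √m * T := by
  have hs : 0 < √(m : ℝ) := Real.sqrt_pos.2 (by exact_mod_cast hm)
  set ν : Fin m → ℝ := (√m)⁻¹ • ((1 : Fin m → ℝ) - Pi.single i 1) with hν
  have hy : ∀ k, √m * (P *ᵥ ν + q) k = ∑ j, P k j - P k i + √m * q k := by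
    intro k
    rw [hν, mulVec_smul, mulVec_sub, mulVec_single_one]
    simp only [Pi.add_apply, Pi.smul_apply, Pi.sub_apply, smul_eq_mul, col_apply]
    rw [mul_add, ← mul_assoc, mul_inv_cancel₀ hs.ne', one_mul]
    simp [mulVec, dotProduct]
  constructor
  · rw [← hy]
    exact mul_nonneg hs.le (hnonneg i)
  · have := mul_le_mul_of_nonneg_left hT hs.le
    rwa [mul_sum, sum_congr rfl fun k _ => hy k, sum_add_distrib, sum_sub_distrib,
      ← mul_sum] at this

theorem natCast_le_mul_of_affine_policy_badU (hm : 0 < m) {P : Matrix (Fin m) (Fin m) ℝ}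
    {q : Fin m → ℝ} {T : ℝ}
    (hfeas : ∀ h ∈ badU m, 0 ≤ P *ᵥ h + q ∧ h ≤ badB m *ᵥ (P *ᵥ h + q))
    (hT : ∀ h ∈ badU m, ∑ k, (P *ᵥ h + q) k ≤ T) :
    (m : ℝ) ≤ (2 * √m + 1) * T := by
  have hs : 0 < √(m : ℝ) := Real.sqrt_pos.2 (by exact_mod_cast hm)
  have hss : √(m : ℝ) * √m = m := Real.mul_self_sqrt (Nat.cast_nonneg m)
  have hsingle i := affine_bounds_at_single hm i (hfeas _ (single_mem_badU i))
    (hT _ (single_mem_badU i))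
  have hnu i := affine_bounds_at_nu hm i (hfeas _ (nu_mem_badU i)).1
    (hT _ (nu_mem_badU i))
  have hcol : ∑ i, ∑ k, P k i = ∑ k, ∑ j, P k j := sum_comm
  have ha := sum_le_sum fun i (_ : i ∈ univ) => (hsingle i).1
  have hb := sum_le_sum fun i (_ : i ∈ univ) => (hnu i).2
  have hc := sum_nonneg fun i (_ : i ∈ univ) => (hnu i).1
  have hd := sum_le_sum fun i (_ : i ∈ univ) => (hsingle i).2
  simp only [sum_add_distrib, sum_sub_distrib, ← mul_sum, sum_const, card_univ,
    Fintype.card_fin, nsmul_eq_mul, hcol] at ha hb hc hd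
  have hm' : (0 : ℝ) < m := by exact_mod_cast hm
  refine le_of_mul_le_mul_left ?_ hm'
  -- `√m • hd + m • hc + hb + (1 + √m) • ha`, using `√m * √m = m`
  nlinarith [mul_le_mul_of_nonneg_left hd hs.le, mul_nonneg hm'.le hc,
    mul_le_mul_of_nonneg_left ha (by positivity : (0 : ℝ) ≤ 1 + √m)]

end BadInstance

/-- For the deterministic worst-case instance, the affine policy value is at
least `(m-1)/(6√m)` times the adjustable value. -/
theorem affine_bad_instance_ratio (m : ℕ) (hm : 2 ≤ m) :
    ((((m : ℝ) - 1) / (6 * Real.sqrt m) : ℝ) : EReal) *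
        zAR (badU m) (0 : Fin m → ℝ) (fun _ => (1 : ℝ)) 0 (badB m) ≤
      zAff (badU m) (0 : Fin m → ℝ) (fun _ => (1 : ℝ)) 0 (badB m) := by
  have hm0 : 0 < m := by omega
  have hAR : zAR (badU m) (0 : Fin m → ℝ) (fun _ => (1 : ℝ)) 0 (badB m) ≤ 1 := by
    refine (zAR_le_of_forall_exists_recourse (t := 1) le_rfl fun h hh => ?_).trans_eq (by simp)
    simpa using exists_recourse_of_mem_badU hm0 hh
  have hAff : ((((m : ℝ) - 1) / (6 * √m) : ℝ) : EReal) ≤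
      zAff (badU m) (0 : Fin m → ℝ) (fun _ => (1 : ℝ)) 0 (badB m) := by
    refine le_zAff_of_forall_le fun x P q _ hfeas T hT => ?_
    have hbound := natCast_le_mul_of_affine_policy_badU hm0
      (fun h hh => by simpa using hfeas h hh) fun h hh => by simpa [dotProduct] using hT h hh
    have hs := one_le_sqrt_natCast hm0
    rw [zero_dotProduct, zero_add, div_le_iff₀ (by positivity)]
    nlinarith
  calc _ ≤ ((((m : ℝ) - 1) / (6 * √m) : ℝ) : EReal) * 1 :=
        mul_le_mul_of_nonneg_left hAR (EReal.coe_nonneg.2 <|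
          div_nonneg (sub_nonneg.2 (Nat.one_le_cast.2 hm0)) (by positivity))
    _ ≤ _ := by rwa [mul_one]
end
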